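/- arXiv:2106.06386 — 5 statements merged into one kernel-verified Lean document; each statement's English description precedes it below -/
import Mathlib

section
/- Let n ≥ 3 and e, p ∈ {1,…,n}. Let B be a rational subspace of ℝⁿ of dimension e and F a rational subspace of ℝⁿ with B ⊆ F, and let φ : F → ℝ^p be a rational linear map (i.e. φ maps F ∩ ℚⁿ into ℚ^p) such that dim φ(B) = dim B. Then there exists a constant c(φ) > 0, depending only on φ (and not on B), such that H(φ(B)) ≤ c(φ)·H(B). -/
open scoped BigOperators ENNReal

noncomputable section

/-- A vector of `ℝⁿ` has rational coordinates. -/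
def IsRatVec {n : ℕ} (v : EuclideanSpace ℝ (Fin n)) : Prop := ∀ i, ∃ q : ℚ, v i = (q : ℝ)

/-- A vector of `ℝⁿ` has integer coordinates. -/
def IsIntVec {n : ℕ} (v : EuclideanSpace ℝ (Fin n)) : Prop := ∀ i, ∃ z : ℤ, v i = (z : ℝ)

/-- A subspace of `ℝⁿ` is rational if it is spanned by vectors with rational coordinates. -/
def IsRationalSubspace {n : ℕ} (B : Submodule ℝ (EuclideanSpace ℝ (Fin n))) : Prop :=
  ∃ S : Set (EuclideanSpace ℝ (Fin n)), (∀ v ∈ S, IsRatVec v) ∧ Submodule.span ℝ S = B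

/-- `v` is a `ℤ`-basis of the lattice `B ∩ ℤⁿ`. -/
def IsZBasisOf {n e : ℕ} (B : Submodule ℝ (EuclideanSpace ℝ (Fin n)))
    (v : Fin e → EuclideanSpace ℝ (Fin n)) : Prop :=
  (∀ i, v i ∈ B ∧ IsIntVec (v i)) ∧
    ∀ x : EuclideanSpace ℝ (Fin n), x ∈ B → IsIntVec x →
      ∃! c : Fin e → ℤ, x = ∑ i, (c i : ℝ) • v i

/-- Generalised determinant `√(det(ᵀM·M))` of a family of vectors, i.e. the norm
`‖v₁ ∧ ⋯ ∧ v_e‖` of their exterior product (square root of the Gram determinant). -/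
def gramDet {n e : ℕ} (v : Fin e → EuclideanSpace ℝ (Fin n)) : ℝ :=
  Real.sqrt (Matrix.det (Matrix.of fun i j => (inner ℝ (v i) (v j) : ℝ)))

/-- Height of a rational subspace: `√(det(ᵀM·M))` for `M` a matrix whose columns form a
`ℤ`-basis of `B ∩ ℤⁿ` (this value is independent of the chosen basis). -/
def height {n : ℕ} (B : Submodule ℝ (EuclideanSpace ℝ (Fin n))) : ℝ :=
  sSup {h : ℝ | ∃ (e : ℕ) (v : Fin e → EuclideanSpace ℝ (Fin n)), IsZBasisOf B v ∧ h = gramDet v}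

/-- `ψ(X,Y)`, the sine of the angle between `X` and `Y`. -/
def psiVec {n : ℕ} (X Y : EuclideanSpace ℝ (Fin n)) : ℝ :=
  Real.sqrt (‖X‖ ^ 2 * ‖Y‖ ^ 2 - (inner ℝ X Y : ℝ) ^ 2) / (‖X‖ * ‖Y‖)

/-- `ψⱼ(A,B)`, the `j`-th canonical angle between the subspaces `A` and `B`. -/
def psiSub {n : ℕ} (j : ℕ) (A B : Submodule ℝ (EuclideanSpace ℝ (Fin n))) : ℝ :=
  sInf {l : ℝ | 0 ≤ l ∧ ∃ Aj : Submodule ℝ (EuclideanSpace ℝ (Fin n)), Aj ≤ A ∧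
    Module.finrank ℝ Aj = j ∧ ∀ X ∈ Aj, X ≠ 0 → ∃ Y ∈ B, Y ≠ 0 ∧ psiVec X Y ≤ l}

/-- `A` is `(e,j)`-irrational: `dim (A ∩ B) < j` for every rational subspace `B` of dim `e`. -/
def IsIrrational {n : ℕ} (e j : ℕ) (A : Submodule ℝ (EuclideanSpace ℝ (Fin n))) : Prop :=
  ∀ B : Submodule ℝ (EuclideanSpace ℝ (Fin n)), IsRationalSubspace B →
    Module.finrank ℝ B = e → Module.finrank ℝ ↥(A ⊓ B) < j

/-- The exponent of approximation `μₙ(A|e)ⱼ ∈ [0,∞]`. -/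
def mu {n : ℕ} (e j : ℕ) (A : Submodule ℝ (EuclideanSpace ℝ (Fin n))) : ℝ≥0∞ :=
  sSup {x : ℝ≥0∞ | ∃ β : ℝ, 0 < β ∧ x = ENNReal.ofReal β ∧
    {B : Submodule ℝ (EuclideanSpace ℝ (Fin n)) | IsRationalSubspace B ∧
      Module.finrank ℝ B = e ∧ psiSub j A B ≤ height B ^ (-β)}.Infinite}

/-- `μ̂ₙ(d|e)ⱼ = inf {μₙ(A|e)ⱼ : A ∈ 𝔍ₙ(d,e)ⱼ}`. -/
def muHat (n d e j : ℕ) : ℝ≥0∞ :=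
  sInf (mu e j '' {A : Submodule ℝ (EuclideanSpace ℝ (Fin n)) |
    Module.finrank ℝ A = d ∧ IsIrrational e j A})

/-!
Let `v` be a `ℤ`-basis of `B ∩ ℤⁿ` and let `q` clear the denominators of `φ` on a `ℤ`-basis of
`F ∩ ℤⁿ`. The vectors `q φ(vᵢ)` are then linearly independent integer points of `φ(B)`, hence
integer combinations of a `ℤ`-basis `w` of `φ(B) ∩ ℤᵖ` through a matrix with nonzero integer
determinant, so `H(φ(B))² = det gram w ≤ det gram (q φ v)`; applied to two `ℤ`-bases of the same
lattice, this comparison also shows that the height is well defined. Writing `v` in an orthonormal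
basis of `B` and bounding the entries of the Gram matrix of its image by `‖q φ‖²` gives
`det gram (q φ v) ≤ e! ‖q φ‖^(2e) det gram v = e! ‖q φ‖^(2e) H(B)²`.
-/

open Matrix Submodule

section Gram

variable {E E' : Type*} [NormedAddCommGroup E] [InnerProductSpace ℝ E]
  [NormedAddCommGroup E'] [InnerProductSpace ℝ E']

theorem gram_sum_smul {ι κ : Type*} [Fintype κ] (A : Matrix ι κ ℝ) (u : κ → E) :
    gram ℝ (fun i ↦ ∑ j, A i j • u j) = A * gram ℝ u * Aᵀ := by
  ext i k
  simp only [gram_apply, mul_apply, transpose_apply, sum_inner, inner_sum,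
    real_inner_smul_left, real_inner_smul_right, Finset.sum_mul]
  exact Finset.sum_congr rfl fun _ _ ↦ Finset.sum_congr rfl fun _ _ ↦ by ring

theorem det_gram_sum_smul {ι : Type*} [Fintype ι] [DecidableEq ι] (A : Matrix ι ι ℝ)
    (u : ι → E) :
    (gram ℝ fun i ↦ ∑ j, A i j • u j).det = A.det ^ 2 * (gram ℝ u).det := by
  rw [gram_sum_smul, det_mul, det_mul, det_transpose]
  ring

theorem det_gram_nonneg {ι : Type*} [Fintype ι] [DecidableEq ι] (u : ι → E) :
    0 ≤ (gram ℝ u).det :=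
  (posSemidef_gram ℝ u).det_nonneg

theorem det_gram_map_orthonormal_le (f : E →L[ℝ] E') {e : ℕ} {b : Fin e → E}
    (hb : Orthonormal ℝ b) : (gram ℝ (f ∘ b)).det ≤ e.factorial * ‖f‖ ^ (2 * e) := by
  have hentry : ∀ i j, |gram ℝ (f ∘ b) i j| ≤ ‖f‖ ^ 2 := fun i j ↦ by
    have hfb : ∀ i, ‖f (b i)‖ ≤ ‖f‖ := fun i ↦ by
      simpa [hb.1 i] using f.le_opNorm (b i)
    calc |gram ℝ (f ∘ b) i j| ≤ ‖f (b i)‖ * ‖f (b j)‖ := abs_real_inner_le_norm _ _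
      _ ≤ ‖f‖ * ‖f‖ := mul_le_mul (hfb i) (hfb j) (norm_nonneg _) (norm_nonneg _)
      _ = ‖f‖ ^ 2 := (sq _).symm
  have := det_le (abv := AbsoluteValue.abs) hentry
  simp only [Fintype.card_fin, nsmul_eq_mul, AbsoluteValue.abs_apply] at this
  rw [pow_mul]
  exact (le_abs_self _).trans this

theorem det_gram_map_le (f : E →L[ℝ] E') {e : ℕ} (v : Fin e → E) :
    (gram ℝ (f ∘ v)).det ≤ e.factorial * ‖f‖ ^ (2 * e) * (gram ℝ v).det := by
  by_cases hv : LinearIndependent ℝ v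
  · set S := span ℝ (Set.range v)
    have : FiniteDimensional ℝ S := FiniteDimensional.span_of_finite ℝ (Set.finite_range v)
    have hS : Module.finrank ℝ S = e := by simp [S, finrank_span_eq_card hv]
    let b : OrthonormalBasis (Fin e) ℝ S := (stdOrthonormalBasis ℝ S).reindex (finCongr hS)
    let A : Matrix (Fin e) (Fin e) ℝ := of fun i k ↦ b.repr ⟨v i, subset_span ⟨i, rfl⟩⟩ k
    have hvA : v = fun i ↦ ∑ k, A i k • (b k : E) := funext fun i ↦ by
      simpa [A] using congrArg Subtype.val (b.sum_repr ⟨v i, subset_span ⟨i, rfl⟩⟩).symm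
    have hfvA : f ∘ v = fun i ↦ ∑ k, A i k • f (b k) := by
      rw [hvA]; ext1 i; simp
    have hortho : Orthonormal ℝ fun k ↦ (b k : E) :=
      b.orthonormal.comp_linearIsometry S.subtypeₗᵢ
    have hgram_v : (gram ℝ v).det = A.det ^ 2 := by
      rw [hvA, det_gram_sum_smul, gram_eq_one_iff_orthonormal.mpr hortho, det_one, mul_one]
    rw [hfvA, det_gram_sum_smul, hgram_v, mul_comm]
    exact mul_le_mul_of_nonneg_right (det_gram_map_orthonormal_le f hortho) (sq_nonneg _)
  · have hfv : ¬ LinearIndependent ℝ (f ∘ v) := fun h ↦ hv (h.of_comp (f : E →ₗ[ℝ] E'))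
    rw [← det_gram_ne_zero_iff_linearIndependent, not_not] at hfv
    rw [hfv]
    exact mul_nonneg (by positivity) (det_gram_nonneg v)

end Gram

local notation "ℝ^" n => EuclideanSpace ℝ (Fin n)

section Lattice

variable {n : ℕ}

theorem IsIntVec.isRatVec {v : ℝ^n} (hv : IsIntVec v) : IsRatVec v := fun i ↦
  let ⟨z, hz⟩ := hv i; ⟨z, by simp [hz]⟩

theorem exists_nat_smul_isIntVec {ι : Type*} [Fintype ι] (v : ι → ℝ^n)
    (hv : ∀ i, IsRatVec (v i)) : ∃ q : ℕ, 0 < q ∧ ∀ i, IsIntVec ((q : ℝ) • v i) := by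
  choose r hr using hv
  refine ⟨∏ it : ι × Fin n, (r it.1 it.2).den, Finset.prod_pos fun _ _ ↦ Rat.den_pos _,
    fun i t ↦ ?_⟩
  obtain ⟨k, hk⟩ := Finset.dvd_prod_of_mem (fun it : ι × Fin n ↦ (r it.1 it.2).den)
    (Finset.mem_univ (i, t))
  have hnum : ((r i t).num : ℝ) = (r i t).den * (r i t : ℝ) := by
    exact_mod_cast (Rat.den_mul_eq_num (r i t)).symm
  refine ⟨k * (r i t).num, ?_⟩
  simp only [PiLp.smul_apply, smul_eq_mul, hr, hk]
  push_cast
  rw [hnum]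
  ring

def intLattice (n : ℕ) : Submodule ℤ (ℝ^n) :=
  span ℤ (Set.range (EuclideanSpace.basisFun (Fin n) ℝ).toBasis)

theorem mem_intLattice {x : ℝ^n} : x ∈ intLattice n ↔ IsIntVec x := by
  rw [intLattice, Module.Basis.mem_span_iff_repr_mem]
  simp [IsIntVec, eq_comm]

theorem exists_isZBasisOf (B : Submodule ℝ (ℝ^n)) :
    ∃ (m : ℕ) (v : Fin m → ℝ^n), IsZBasisOf B v := by
  let L := intLattice n ⊓ B.restrictScalars ℤ
  obtain ⟨m, b⟩ := basisOfPidOfLE (inf_le_left : L ≤ intLattice n)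
    ((EuclideanSpace.basisFun (Fin n) ℝ).toBasis.restrictScalars ℤ)
  have hmem : ∀ {x}, x ∈ L ↔ x ∈ B ∧ IsIntVec x := by simp [L, mem_intLattice, and_comm]
  have hcoe (c : Fin m → ℤ) : ((∑ i, c i • b i : L) : ℝ^n) = ∑ i, (c i : ℝ) • (b i : ℝ^n) := by
    simp [Int.cast_smul_eq_zsmul]
  refine ⟨m, fun i ↦ b i, fun i ↦ hmem.1 (b i).2, fun x hxB hxZ ↦ ?_⟩
  let xL : L := ⟨x, hmem.2 ⟨hxB, hxZ⟩⟩
  refine ⟨b.repr xL, ?_, fun c hc ↦ ?_⟩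
  · exact (congrArg Subtype.val (b.sum_repr xL)).symm.trans (hcoe _)
  · have : xL = ∑ i, c i • b i := Subtype.ext (by rw [hcoe]; exact hc)
    rw [this, b.repr_sum_self]

variable {m e : ℕ} {A : Submodule ℝ (ℝ^n)}

theorem IsZBasisOf.linearIndependent {v : Fin m → ℝ^n} (hv : IsZBasisOf A v) :
    LinearIndependent ℝ v := by
  choose z hz using fun i ↦ (hv.1 i).2
  let G : Matrix (Fin m) (Fin m) ℤ := of fun i j ↦ ∑ t, z i t * z j t
  have hG : gram ℝ v = G.map (Int.cast : ℤ → ℝ) := by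
    ext i j
    simp [G, gram_apply, PiLp.inner_apply, hz, mul_comm]
  -- A singular integer Gram matrix has an integer kernel vector, i.e. an integer relation.
  rw [← det_gram_ne_zero_iff_linearIndependent, hG, ← Int.cast_det]
  intro hdet
  obtain ⟨c, hc0, hc⟩ := exists_mulVec_eq_zero_iff.mpr (Int.cast_eq_zero.mp hdet)
  have hGc : gram ℝ v *ᵥ (fun i ↦ (c i : ℝ)) = 0 := by
    rw [hG]
    ext i
    simpa [mulVec, dotProduct] using congr_arg (Int.cast : ℤ → ℝ) (congrFun hc i)
  have hsum : ∑ i, (c i : ℝ) • v i = 0 := by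
    rw [← inner_self_eq_zero (𝕜 := ℝ), ← star_dotProduct_gram_mulVec, hGc, dotProduct_zero]
  exact hc0 ((hv.2 0 (zero_mem A) (mem_intLattice.1 (zero_mem _))).unique hsum.symm
    (by simp))

theorem IsZBasisOf.det_gram_le {w u : Fin e → ℝ^n} (hw : IsZBasisOf A w)
    (hu : ∀ i, u i ∈ A ∧ IsIntVec (u i)) (hli : LinearIndependent ℝ u) :
    (gram ℝ w).det ≤ (gram ℝ u).det := by
  choose D hD using fun i ↦ (hw.2 (u i) (hu i).1 (hu i).2).exists
  have hdet : (gram ℝ u).det = ((of D).det : ℝ) ^ 2 * (gram ℝ w).det := by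
    rw [Int.cast_det, ← det_gram_sum_smul]
    congr
    exact funext hD
  have hD0 : (of D).det ≠ 0 := fun h ↦
    det_gram_ne_zero_iff_linearIndependent.mpr hli (by simp [hdet, h])
  have hD1 : (1 : ℝ) ≤ ((of D).det : ℝ) ^ 2 := by
    exact_mod_cast one_le_sq_iff_one_le_abs _ |>.mpr (Int.one_le_abs hD0)
  rw [hdet]
  exact le_mul_of_one_le_left (det_gram_nonneg w) hD1

theorem IsZBasisOf.span_eq (hA : IsRationalSubspace A) {v : Fin m → ℝ^n}
    (hv : IsZBasisOf A v) : span ℝ (Set.range v) = A := by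
  refine le_antisymm (span_le.2 (Set.range_subset_iff.2 fun i ↦ (hv.1 i).1)) ?_
  obtain ⟨S, hSrat, rfl⟩ := hA
  refine span_le.2 fun s hs ↦ ?_
  obtain ⟨q, hq, hqs⟩ := exists_nat_smul_isIntVec (fun _ : Unit ↦ s) fun _ ↦ hSrat s hs
  obtain ⟨c, hc, -⟩ := hv.2 _ (smul_mem _ _ (subset_span hs)) (hqs ())
  have : s = (q : ℝ)⁻¹ • ∑ i, (c i : ℝ) • v i := by
    rw [← hc, inv_smul_smul₀ (by positivity)]
  rw [this]
  exact smul_mem _ _ (sum_mem fun i _ ↦ smul_mem _ _ (subset_span ⟨i, rfl⟩))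

theorem IsZBasisOf.finrank_eq (hA : IsRationalSubspace A) {v : Fin m → ℝ^n}
    (hv : IsZBasisOf A v) : Module.finrank ℝ A = m := by
  rw [← hv.span_eq hA, finrank_span_eq_card hv.linearIndependent, Fintype.card_fin]

theorem IsZBasisOf.gramDet_le (hA : IsRationalSubspace A) {w : Fin m → ℝ^n}
    (hw : IsZBasisOf A w) {u : Fin e → ℝ^n} (hu : ∀ i, u i ∈ A ∧ IsIntVec (u i))
    (hli : LinearIndependent ℝ u) (he : Module.finrank ℝ A = e) : gramDet w ≤ gramDet u := by
  obtain rfl : m = e := (hw.finrank_eq hA).symm.trans he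
  exact Real.sqrt_le_sqrt (hw.det_gram_le hu hli)

theorem height_le_gramDet (hA : IsRationalSubspace A) {u : Fin e → ℝ^n}
    (hu : ∀ i, u i ∈ A ∧ IsIntVec (u i)) (hli : LinearIndependent ℝ u)
    (he : Module.finrank ℝ A = e) : height A ≤ gramDet u :=
  Real.sSup_le (fun _ ⟨_, _, hw, h⟩ ↦ h ▸ hw.gramDet_le hA hu hli he) (Real.sqrt_nonneg _)

theorem IsZBasisOf.height_eq (hA : IsRationalSubspace A) {v : Fin m → ℝ^n}
    (hv : IsZBasisOf A v) : height A = gramDet v :=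
  have hbound : ∀ h ∈ {h : ℝ | ∃ (e : ℕ) (w : Fin e → ℝ^n), IsZBasisOf A w ∧ h = gramDet w},
      h ≤ gramDet v := fun _ ⟨_, _, hw, h⟩ ↦
    h ▸ hw.gramDet_le hA hv.1 hv.linearIndependent (hv.finrank_eq hA)
  le_antisymm (Real.sSup_le hbound (Real.sqrt_nonneg _)) (le_csSup ⟨_, hbound⟩ ⟨m, v, hv, rfl⟩)

end Lattice

theorem exists_nat_smul_map_isIntVec {n p : ℕ} {F : Submodule ℝ (ℝ^n)} (φ : F →ₗ[ℝ] ℝ^p)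
    (hφ : ∀ x : F, IsRatVec (x : ℝ^n) → IsRatVec (φ x)) :
    ∃ q : ℕ, 0 < q ∧ ∀ x : F, IsIntVec (x : ℝ^n) → IsIntVec ((q : ℝ) • φ x) := by
  obtain ⟨m, f, hf⟩ := exists_isZBasisOf F
  let fF : Fin m → F := fun i ↦ ⟨f i, (hf.1 i).1⟩
  obtain ⟨q, hq, hqf⟩ :=
    exists_nat_smul_isIntVec (fun i ↦ φ (fF i)) fun i ↦ hφ _ (hf.1 i).2.isRatVec
  refine ⟨q, hq, fun x hx ↦ ?_⟩
  obtain ⟨c, hc, -⟩ := hf.2 x x.2 hx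
  have hx : x = ∑ i, (c i : ℝ) • fF i := Subtype.ext (by simpa [fF] using hc)
  rw [← mem_intLattice, hx, map_sum, Finset.smul_sum]
  refine sum_mem fun i _ ↦ ?_
  rw [map_smul, smul_comm, Int.cast_smul_eq_zsmul]
  exact zsmul_mem (mem_intLattice.2 (hqf i)) _

theorem span_range_eq_comap_subtype {K E ι : Type*} [Semiring K] [AddCommMonoid E] [Module K E]
    {F B : Submodule K E} (hBF : B ≤ F) {v : ι → F}
    (hv : span K (Set.range fun i ↦ (v i : E)) = B) :
    span K (Set.range v) = B.comap F.subtype := by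
  apply map_injective_of_injective F.injective_subtype
  rw [map_comap_subtype, inf_eq_right.mpr hBF, map_span, ← Set.range_comp, ← hv]
  rfl

theorem height_map_le_gramDet {n p m : ℕ} {F B : Submodule ℝ (ℝ^n)} (φ : F →ₗ[ℝ] ℝ^p)
    (hφ : ∀ x : F, IsRatVec (x : ℝ^n) → IsRatVec (φ x)) {q : ℕ} (hq : 0 < q)
    (hqφ : ∀ x : F, IsIntVec (x : ℝ^n) → IsIntVec ((q : ℝ) • φ x))
    (hB : IsRationalSubspace B) (hBF : B ≤ F)
    (hφB : Module.finrank ℝ (map φ (B.comap F.subtype)) = Module.finrank ℝ B)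
    {v : Fin m → ℝ^n} (hv : IsZBasisOf B v) :
    height (map φ (B.comap F.subtype)) ≤ gramDet fun i ↦ (q : ℝ) • φ ⟨v i, hBF (hv.1 i).1⟩ := by
  let vF : Fin m → F := fun i ↦ ⟨v i, hBF (hv.1 i).1⟩
  have hspan : span ℝ (Set.range (φ ∘ vF)) = map φ (B.comap F.subtype) := by
    rw [Set.range_comp, ← map_span, span_range_eq_comap_subtype hBF (v := vF) (hv.span_eq hB)]
  have hrank : Module.finrank ℝ (map φ (B.comap F.subtype)) = m := by
    rw [hφB, hv.finrank_eq hB]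
  have hli : LinearIndependent ℝ (φ ∘ vF) := by
    rw [linearIndependent_iff_card_eq_finrank_span, Set.finrank, hspan, hrank, Fintype.card_fin]
  refine height_le_gramDet ⟨_, Set.forall_mem_range.2 fun i ↦ hφ _ (hv.1 i).2.isRatVec, hspan⟩
    (fun i ↦ ⟨smul_mem _ _ (mem_map_of_mem (hv.1 i).1), hqφ _ (hv.1 i).2⟩)
    (hli.units_smul fun _ ↦ Units.mk0 (q : ℝ) (by positivity)) hrank

theorem statement6_general (n e p : ℕ)
    (F : Submodule ℝ (EuclideanSpace ℝ (Fin n)))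
    (φ : F →ₗ[ℝ] EuclideanSpace ℝ (Fin p))
    (hφ : ∀ x : F, IsRatVec (x : EuclideanSpace ℝ (Fin n)) → IsRatVec (φ x)) :
    ∃ c > 0, ∀ B : Submodule ℝ (EuclideanSpace ℝ (Fin n)),
      IsRationalSubspace B → Module.finrank ℝ B = e → B ≤ F →
      Module.finrank ℝ ↥(Submodule.map φ (B.comap F.subtype)) = Module.finrank ℝ B →
      height (Submodule.map φ (B.comap F.subtype)) ≤ c * height B := by
  obtain ⟨q, hq, hqφ⟩ := exists_nat_smul_map_isIntVec φ hφ
  let ψ : F →L[ℝ] ℝ^p := (q : ℝ) • LinearMap.toContinuousLinearMap φ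
  set c₀ := √(e.factorial * ‖ψ‖ ^ (2 * e))
  refine ⟨c₀ + 1, by positivity, fun B hB hBe hBF hφB ↦ ?_⟩
  obtain ⟨m, v, hv⟩ := exists_isZBasisOf B
  obtain rfl : m = e := (hv.finrank_eq hB).symm.trans hBe
  calc height (map φ (B.comap F.subtype))
      ≤ gramDet (ψ ∘ fun i ↦ ⟨v i, hBF (hv.1 i).1⟩) :=
        height_map_le_gramDet φ hφ hq hqφ hB hBF hφB hv
    _ ≤ c₀ * gramDet v := by
      rw [gramDet, gramDet, ← Real.sqrt_mul (by positivity)]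
      exact Real.sqrt_le_sqrt (det_gram_map_le ψ _)
    _ ≤ (c₀ + 1) * height B := by
      rw [hv.height_eq hB]
      exact mul_le_mul_of_nonneg_right (le_add_of_nonneg_right zero_le_one) (Real.sqrt_nonneg _)

/-- **Lemma 2.4.** For a rational linear map `φ : F → ℝᵖ`, there is a constant `c(φ) > 0`,
depending only on `φ`, such that `H(φ(B)) ≤ c(φ)·H(B)` for every rational subspace `B ⊆ F`
of dimension `e` with `dim φ(B) = dim B`. -/
theorem statement6 (n e p : ℕ) (hn : 3 ≤ n) (he1 : 1 ≤ e) (hen : e ≤ n)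
    (hp1 : 1 ≤ p) (hpn : p ≤ n)
    (F : Submodule ℝ (EuclideanSpace ℝ (Fin n))) (hF : IsRationalSubspace F)
    (φ : F →ₗ[ℝ] EuclideanSpace ℝ (Fin p))
    (hφ : ∀ x : F, IsRatVec (x : EuclideanSpace ℝ (Fin n)) → IsRatVec (φ x)) :
    ∃ c > 0, ∀ B : Submodule ℝ (EuclideanSpace ℝ (Fin n)),
      IsRationalSubspace B → Module.finrank ℝ B = e → B ≤ F →
      Module.finrank ℝ ↥(Submodule.map φ (B.comap F.subtype)) = Module.finrank ℝ B →
      height (Submodule.map φ (B.comap F.subtype)) ≤ c * height B :=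
  statement6_general n e p F φ hφ
end
end

section
/- Let F be a subspace of ℝⁿ, p_F the orthogonal projection of ℝⁿ onto F, and A a subspace of F with dim A ≥ j. Let 𝓡 be a non-empty subset of ℝⁿ∖{0} with 𝓡 ∩ F^⊥ = ∅ and suppose there is a constant c > 0 such that ‖p_F(X)‖ ≥ c‖X‖ for all X ∈ 𝓡. Let D be a subspace of ℝⁿ with dim D ≥ j and D ⊆ 𝓡 ∪ {0}. Then ψ_j(A, D) ≥ c'·ψ_j(A, p_F(D)), where c' > 0 depends only on c (one may take c' = √(c/2)). -/
open scoped BigOperators ENNReal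

noncomputable section

/-!
For `X ∈ F` the projection `p_F` does not change `⟪X, Y⟫` and does not increase `‖Y‖`, so it can
only increase `|cos ∠(X, Y)|`: `ψ(X, p_F Y) ≤ ψ(X, Y)` whenever `p_F Y ≠ 0`. As `D` meets `F^⊥`
only in `0`, every witness `Y ∈ D` in the definition of `ψⱼ(A, D)` thus gives the witness
`p_F Y ∈ p_F(D)`, hence `ψⱼ(A, p_F(D)) ≤ ψⱼ(A, D)`. Finally `c ≤ 1`, because `‖p_F X‖ ≤ ‖X‖`
and `𝓡` contains a nonzero vector, so `√(c/2) ≤ 1`.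
-/

lemma Submodule.exists_le_finrank_eq {K V : Type*} [Field K] [AddCommGroup V] [Module K V]
    {j : ℕ} {A : Submodule K V} (hA : j ≤ Module.finrank K A) :
    ∃ Aj ≤ A, Module.finrank K Aj = j := by
  obtain ⟨f, hf⟩ := exists_linearIndependent_of_le_finrank hA
  refine ⟨Submodule.span K (Set.range (A.subtype ∘ f)), ?_, ?_⟩
  · exact Submodule.span_le.mpr (Set.range_subset_iff.mpr fun i => (f i).2)
  · rw [finrank_span_eq_card (hf.map' A.subtype A.ker_subtype), Fintype.card_fin]

section CanonicalAngles

variable {n : ℕ}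

open Real
open scoped InnerProductSpace

local notation "𝔼" => EuclideanSpace ℝ (Fin n)

lemma psiVec_eq_sqrt_one_sub {X Y : 𝔼} (hX : X ≠ 0) (hY : Y ≠ 0) :
    psiVec X Y = √(1 - ⟪X, Y⟫_ℝ ^ 2 / (‖X‖ * ‖Y‖) ^ 2) := by
  have hXY : 0 < ‖X‖ * ‖Y‖ := mul_pos (norm_pos_iff.mpr hX) (norm_pos_iff.mpr hY)
  have h : 1 - ⟪X, Y⟫_ℝ ^ 2 / (‖X‖ * ‖Y‖) ^ 2 =
      (‖X‖ ^ 2 * ‖Y‖ ^ 2 - ⟪X, Y⟫_ℝ ^ 2) / (‖X‖ * ‖Y‖) ^ 2 := by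
    field_simp
  rw [psiVec, h, Real.sqrt_div' _ (sq_nonneg _), Real.sqrt_sq hXY.le]

lemma psiVec_le_one {X Y : 𝔼} (hX : X ≠ 0) (hY : Y ≠ 0) : psiVec X Y ≤ 1 := by
  rw [psiVec_eq_sqrt_one_sub hX hY, Real.sqrt_le_one]
  exact sub_le_self 1 (by positivity)

lemma psiVec_le_psiVec_of_inner_eq {X Y Y' : 𝔼} (hX : X ≠ 0) (hY' : Y' ≠ 0)
    (hnorm : ‖Y'‖ ≤ ‖Y‖) (hinner : ⟪X, Y'⟫_ℝ = ⟪X, Y⟫_ℝ) : psiVec X Y' ≤ psiVec X Y := by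
  have hY : Y ≠ 0 := norm_pos_iff.mp ((norm_pos_iff.mpr hY').trans_le hnorm)
  rw [psiVec_eq_sqrt_one_sub hX hY', psiVec_eq_sqrt_one_sub hX hY, hinner]
  have hXY' : 0 < ‖X‖ * ‖Y'‖ := mul_pos (norm_pos_iff.mpr hX) (norm_pos_iff.mpr hY')
  gcongr

lemma psiVec_starProjection_le {F : Submodule ℝ 𝔼} {X Y : 𝔼} (hX : X ∈ F) (hX0 : X ≠ 0)
    (hY : Y ∉ Fᗮ) : psiVec X (F.starProjection Y) ≤ psiVec X Y :=
  psiVec_le_psiVec_of_inner_eq hX0 (by rwa [Ne, Submodule.starProjection_apply_eq_zero_iff])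
    (F.norm_starProjection_apply_le Y)
    (by rw [← Submodule.inner_starProjection_left_eq_right,
      Submodule.starProjection_eq_self_iff.mpr hX])

def canonicalAngleBounds (j : ℕ) (A B : Submodule ℝ 𝔼) : Set ℝ :=
  {l : ℝ | 0 ≤ l ∧ ∃ Aj : Submodule ℝ 𝔼, Aj ≤ A ∧
    Module.finrank ℝ Aj = j ∧ ∀ X ∈ Aj, X ≠ 0 → ∃ Y ∈ B, Y ≠ 0 ∧ psiVec X Y ≤ l}

lemma psiSub_eq_sInf (j : ℕ) (A B : Submodule ℝ 𝔼) :
    psiSub j A B = sInf (canonicalAngleBounds j A B) := rfl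

lemma psiSub_nonneg (j : ℕ) (A B : Submodule ℝ 𝔼) : 0 ≤ psiSub j A B := by
  rw [psiSub_eq_sInf]
  exact Real.sInf_nonneg fun _ hl => hl.1

lemma one_mem_canonicalAngleBounds {j : ℕ} {A B : Submodule ℝ 𝔼}
    (hA : j ≤ Module.finrank ℝ A) (hB : j ≤ Module.finrank ℝ B) :
    1 ∈ canonicalAngleBounds j A B := by
  obtain ⟨Aj, hAjA, hAj⟩ := A.exists_le_finrank_eq hA
  refine ⟨zero_le_one, Aj, hAjA, hAj, fun X hX hX0 => ?_⟩
  have hAj_pos : 0 < Module.finrank ℝ Aj :=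
    Module.finrank_pos_iff_exists_ne_zero.mpr ⟨⟨X, hX⟩, by simpa using hX0⟩
  obtain ⟨⟨Y, hYB⟩, hY0⟩ :=
    Module.finrank_pos_iff_exists_ne_zero.mp (hAj_pos.trans_le (hAj ▸ hB))
  exact ⟨Y, hYB, by simpa using hY0, psiVec_le_one hX0 (by simpa using hY0)⟩

lemma psiSub_le_psiSub {j : ℕ} {A B B' : Submodule ℝ 𝔼}
    (hA : j ≤ Module.finrank ℝ A) (hB : j ≤ Module.finrank ℝ B)
    (h : ∀ X ∈ A, X ≠ 0 → ∀ Y ∈ B, Y ≠ 0 → ∃ Y' ∈ B', Y' ≠ 0 ∧ psiVec X Y' ≤ psiVec X Y) :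
    psiSub j A B' ≤ psiSub j A B := by
  rw [psiSub_eq_sInf, psiSub_eq_sInf]
  refine csInf_le_csInf ⟨0, fun _ hl => hl.1⟩ ⟨1, one_mem_canonicalAngleBounds hA hB⟩ ?_
  rintro l ⟨hl, Aj, hAjA, hAj, hAjB⟩
  refine ⟨hl, Aj, hAjA, hAj, fun X hX hX0 => ?_⟩
  obtain ⟨Y, hYB, hY0, hXY⟩ := hAjB X hX hX0
  obtain ⟨Y', hY'B', hY'0, hXY'⟩ := h X (hAjA hX) hX0 Y hYB hY0
  exact ⟨Y', hY'B', hY'0, hXY'.trans hXY⟩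

lemma psiSub_map_starProjection_le {j : ℕ} {F A D : Submodule ℝ 𝔼} (hAF : A ≤ F)
    (hA : j ≤ Module.finrank ℝ A) (hD : j ≤ Module.finrank ℝ D) (hDF : Disjoint D Fᗮ) :
    psiSub j A (D.map (F.starProjection : 𝔼 →ₗ[ℝ] 𝔼)) ≤ psiSub j A D := by
  refine psiSub_le_psiSub hA hD fun X hX hX0 Y hYD hY0 => ?_
  have hYF : Y ∉ Fᗮ := fun hYF => hY0 (Submodule.disjoint_def.mp hDF Y hYD hYF)
  refine ⟨F.starProjection Y, Submodule.mem_map_of_mem hYD, ?_,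
    psiVec_starProjection_le (hAF hX) hX0 hYF⟩
  rwa [Ne, Submodule.starProjection_apply_eq_zero_iff]

end CanonicalAngles

theorem statement7_general (n j : ℕ) (F A D : Submodule ℝ (EuclideanSpace ℝ (Fin n)))
    (hAF : A ≤ F) (hAj : j ≤ Module.finrank ℝ A)
    (R : Set (EuclideanSpace ℝ (Fin n))) (hRne : R.Nonempty)
    (hR0 : (0 : EuclideanSpace ℝ (Fin n)) ∉ R)
    (hRF : R ∩ (Fᗮ : Set (EuclideanSpace ℝ (Fin n))) = ∅)
    (c : ℝ)
    (hproj : ∀ X ∈ R, c * ‖X‖ ≤ ‖(Submodule.orthogonalProjection F X : EuclideanSpace ℝ (Fin n))‖)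
    (hDj : j ≤ Module.finrank ℝ D) (hDR : (D : Set (EuclideanSpace ℝ (Fin n))) ⊆ R ∪ {0}) :
    Real.sqrt (c / 2) *
        psiSub j A (D.map (F.subtype ∘ₗ (Submodule.orthogonalProjection F).toLinearMap)) ≤
      psiSub j A D := by
  obtain ⟨X₀, hX₀⟩ := hRne
  have hc1 : c ≤ 1 := by
    have hX₀_pos : 0 < ‖X₀‖ := norm_pos_iff.mpr (ne_of_mem_of_not_mem hX₀ hR0)
    refine le_of_mul_le_mul_right ?_ hX₀_pos
    simpa using (hproj X₀ hX₀).trans (F.norm_starProjection_apply_le X₀)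
  have hDF : Disjoint D Fᗮ := Submodule.disjoint_def.mpr fun Y hYD hYF =>
    (hDR hYD).resolve_left fun hYR => (Set.eq_empty_iff_forall_notMem.mp hRF) Y ⟨hYR, hYF⟩
  refine (mul_le_of_le_one_left (psiSub_nonneg _ _ _) ?_).trans
    (psiSub_map_starProjection_le hAF hAj hDj hDF)
  exact Real.sqrt_le_one.mpr (by linarith)

/-- **Lemma 3.1.** If every `X ∈ 𝓡` satisfies `‖p_F(X)‖ ≥ c‖X‖`, `A ⊆ F` with `dim A ≥ j`, and
`D ⊆ 𝓡 ∪ {0}` with `dim D ≥ j`, then `ψⱼ(A, D) ≥ √(c/2)·ψⱼ(A, p_F(D))`. -/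
theorem statement7 (n j : ℕ) (F A D : Submodule ℝ (EuclideanSpace ℝ (Fin n)))
    (hAF : A ≤ F) (hAj : j ≤ Module.finrank ℝ A)
    (R : Set (EuclideanSpace ℝ (Fin n))) (hRne : R.Nonempty)
    (hR0 : (0 : EuclideanSpace ℝ (Fin n)) ∉ R)
    (hRF : R ∩ (Fᗮ : Set (EuclideanSpace ℝ (Fin n))) = ∅)
    (c : ℝ) (hc : 0 < c)
    (hproj : ∀ X ∈ R, c * ‖X‖ ≤ ‖(Submodule.orthogonalProjection F X : EuclideanSpace ℝ (Fin n))‖)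
    (hDj : j ≤ Module.finrank ℝ D) (hDR : (D : Set (EuclideanSpace ℝ (Fin n))) ⊆ R ∪ {0}) :
    Real.sqrt (c / 2) *
        psiSub j A (D.map (F.subtype ∘ₗ (Submodule.orthogonalProjection F).toLinearMap)) ≤
      psiSub j A D :=
  statement7_general n j F A D hAF hAj R hRne hR0 hRF c hproj hDj hDR

end
end

section
/- Let F be a subspace of ℝⁿ, p_F the orthogonal projection of ℝⁿ onto F, and let 0 < c ≤ 1. Then for every nonzero X ∈ F and every nonzero Y ∈ ℝⁿ with ‖p_F(Y)‖ ≥ c‖Y‖ (so in particular p_F(Y) ≠ 0), one has ψ(X, p_F(Y)) ≤ √(2/c)·ψ(X, Y). -/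
open scoped BigOperators ENNReal

noncomputable section

/-! Since `X ∈ F`, projecting `Y` onto `F` does not change `⟪X, Y⟫` and can only shorten `Y`.
As `ψ(X,Y)² = 1 - ⟪X,Y⟫² / (‖X‖‖Y‖)²`, this can only decrease `ψ`, so in fact
`ψ(X, p_F(Y)) ≤ ψ(X, Y)`, and `√(2/c) ≥ 1`. -/

open scoped RealInnerProductSpace

/-- `u = 0` is allowed, the left side then being `0` by the convention `x / 0 = 0`; this is what
lets the comparison of `ψ` below go through without nonvanishing hypotheses. -/
theorem sub_div_self_le_sub_div_self {s u v : ℝ} (hs : 0 ≤ s) (hu : 0 ≤ u) (huv : u ≤ v)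
    (hsv : s ≤ v) : (u - s) / u ≤ (v - s) / v := by
  rcases hu.eq_or_lt with rfl | hu
  · rw [div_zero]
    exact div_nonneg (sub_nonneg.2 hsv) (hs.trans hsv)
  · rw [sub_div, sub_div, div_self hu.ne', div_self (hu.trans_le huv).ne']
    exact sub_le_sub_left (div_le_div_of_nonneg_left hs hu huv) 1

theorem Submodule.inner_orthogonalProjectionOnto_eq_of_mem {𝕜 E : Type*} [RCLike 𝕜]
    [NormedAddCommGroup E] [InnerProductSpace 𝕜 E] (K : Submodule 𝕜 E)
    [K.HasOrthogonalProjection] {x : E} (hx : x ∈ K) (y : E) :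
    inner 𝕜 x (K.orthogonalProjectionOnto y : E) = inner 𝕜 x y := by
  rw [← K.starProjection_apply, ← K.inner_starProjection_left_eq_right,
    K.starProjection_eq_self_iff.2 hx]

section psiVec

variable {n : ℕ}

theorem psiVec_nonneg (X Y : EuclideanSpace ℝ (Fin n)) : 0 ≤ psiVec X Y := by
  unfold psiVec
  positivity

theorem psiVec_eq_sqrt (X Y : EuclideanSpace ℝ (Fin n)) :
    psiVec X Y = √((‖X‖ ^ 2 * ‖Y‖ ^ 2 - ⟪X, Y⟫ ^ 2) / (‖X‖ ^ 2 * ‖Y‖ ^ 2)) := by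
  rw [psiVec, Real.sqrt_div' _ (by positivity), ← mul_pow, Real.sqrt_sq (by positivity)]

theorem psiVec_le_of_inner_eq_of_norm_le {X Y Y' : EuclideanSpace ℝ (Fin n)}
    (hinner : ⟪X, Y'⟫ = ⟪X, Y⟫) (hnorm : ‖Y'‖ ≤ ‖Y‖) : psiVec X Y' ≤ psiVec X Y := by
  have hCS : ⟪X, Y⟫ ^ 2 ≤ ‖X‖ ^ 2 * ‖Y‖ ^ 2 := by
    rw [← mul_pow, ← sq_abs]
    gcongr
    exact abs_real_inner_le_norm X Y
  rw [psiVec_eq_sqrt, psiVec_eq_sqrt, hinner]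
  exact Real.sqrt_le_sqrt <|
    sub_div_self_le_sub_div_self (sq_nonneg _) (by positivity) (by gcongr) hCS

end psiVec

theorem statement10_general (n : ℕ) (F : Submodule ℝ (EuclideanSpace ℝ (Fin n))) (c : ℝ)
    (hc0 : 0 < c) (hc1 : c ≤ 1) (X Y : EuclideanSpace ℝ (Fin n))
    (hXF : X ∈ F) :
    psiVec X (Submodule.orthogonalProjection F Y : EuclideanSpace ℝ (Fin n)) ≤
      Real.sqrt (2 / c) * psiVec X Y := by
  have h_one_le : 1 ≤ √(2 / c) := Real.one_le_sqrt.2 ((one_le_div₀ hc0).2 (by linarith))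
  calc _ ≤ psiVec X Y :=
        psiVec_le_of_inner_eq_of_norm_le (F.inner_orthogonalProjectionOnto_eq_of_mem hXF Y)
          (F.norm_orthogonalProjectionOnto_apply_le Y)
    _ ≤ √(2 / c) * psiVec X Y := le_mul_of_one_le_left (psiVec_nonneg X Y) h_one_le

/-- **Inequality (3).** For `0 < c ≤ 1`, nonzero `X ∈ F` and nonzero `Y` with
`‖p_F(Y)‖ ≥ c‖Y‖`, one has `ψ(X, p_F(Y)) ≤ √(2/c)·ψ(X, Y)`. -/
theorem statement10 (n : ℕ) (F : Submodule ℝ (EuclideanSpace ℝ (Fin n))) (c : ℝ)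
    (hc0 : 0 < c) (hc1 : c ≤ 1) (X Y : EuclideanSpace ℝ (Fin n))
    (hXF : X ∈ F) (hX0 : X ≠ 0) (hY0 : Y ≠ 0)
    (hproj : c * ‖Y‖ ≤ ‖(Submodule.orthogonalProjection F Y : EuclideanSpace ℝ (Fin n))‖) :
    psiVec X (Submodule.orthogonalProjection F Y : EuclideanSpace ℝ (Fin n)) ≤
      Real.sqrt (2 / c) * psiVec X Y :=
  statement10_general n F c hc0 hc1 X Y hXF

end
end

section
/- Let ℓ ≥ 1 and let (ξ_{i,j})_{(i,j)∈{1,…,ℓ}²} be ℓ² real numbers that are algebraically independent over ℚ. Let M_ξ = (ξ_{i,j}) ∈ M_ℓ(ℝ) and let A ⊆ ℝ^{2ℓ} be the ℓ-dimensional subspace spanned by the columns of the block matrix (I_ℓ ; M_ξ) ∈ M_{2ℓ,ℓ}(ℝ) (identity block on top, M_ξ below). Then A ∩ B = {0} for every rational subspace B of ℝ^{2ℓ} of dimension ℓ. -/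
open scoped BigOperators ENNReal

noncomputable section

/-!
If `x ≠ 0` lies in `A ∩ B`, write `x = (I; M_ξ) c = (P; Q) d`, where the columns of the rational
matrix `(P; Q)` form a basis of `B`. Then `c = P d` and `M_ξ P d = Q d`, so `det (M_ξ P - Q) = 0`.
This determinant is a polynomial with rational coefficients in the entries of `M_ξ`, so by
algebraic independence it vanishes identically. But since `ker P ∩ ker Q = 0` there is a rational
`X` with `det (X P - Q) ≠ 0`: extend `Q` restricted to `ker P` to an automorphism `G`, and factor
`Q - G`, which kills `ker P`, as `X P`.
-/

open Matrix

theorem LinearMap.exists_comp_eq_of_ker_le {K V W U : Type*} [DivisionRing K]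
    [AddCommGroup V] [Module K V] [AddCommGroup W] [Module K W] [AddCommGroup U] [Module K U]
    (p : V →ₗ[K] W) (f : V →ₗ[K] U) (h : LinearMap.ker p ≤ LinearMap.ker f) :
    ∃ x : W →ₗ[K] U, x ∘ₗ p = f := by
  obtain ⟨x, hx⟩ := LinearMap.exists_extend
    ((LinearMap.ker p).liftQ f h ∘ₗ p.quotKerEquivRange.symm.toLinearMap)
  refine ⟨x, LinearMap.ext fun v => ?_⟩
  simpa using LinearMap.congr_fun hx ⟨p v, LinearMap.mem_range_self p v⟩

theorem LinearMap.exists_injective_comp_sub {K V W : Type*} [DivisionRing K]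
    [AddCommGroup V] [Module K V] [FiniteDimensional K V] [AddCommGroup W] [Module K W]
    (p : V →ₗ[K] W) (q : V →ₗ[K] V) (h : Disjoint (LinearMap.ker p) (LinearMap.ker q)) :
    ∃ x : W →ₗ[K] V, Function.Injective (x ∘ₗ p - q) := by
  obtain ⟨g, hg⟩ := Submodule.exists_linearEquiv_restrict_eq
    (LinearEquiv.ofInjective _ (LinearMap.injective_domRestrict_iff.mpr h))
  obtain ⟨x, hx⟩ := p.exists_comp_eq_of_ker_le (q - g.toLinearMap) fun k hk => by
    simpa [sub_eq_zero] using hg ⟨k, hk⟩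
  refine ⟨x, ?_⟩
  rw [hx, sub_sub_cancel_left]
  exact neg_injective.comp g.injective

theorem Matrix.exists_det_mul_sub_ne_zero {K n : Type*} [Field K] [Fintype n] [DecidableEq n]
    (P Q : Matrix n n K) (h : ∀ v, P *ᵥ v = 0 → Q *ᵥ v = 0 → v = 0) :
    ∃ X : Matrix n n K, (X * P - Q).det ≠ 0 := by
  obtain ⟨x, hx⟩ := (toLin' P).exists_injective_comp_sub (toLin' Q)
    (Submodule.disjoint_def.mpr fun v hP hQ => h v hP hQ)
  refine ⟨LinearMap.toMatrix' x, fun hdet => ?_⟩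
  obtain ⟨v, hv0, hv⟩ := exists_mulVec_eq_zero_iff.mpr hdet
  refine hv0 (hx ?_)
  simpa [sub_mulVec, ← mulVec_mulVec] using hv

theorem Matrix.aeval_det_mvPolynomialX_mul_sub {K S n : Type*} [CommRing K] [CommRing S]
    [Algebra K S] [Fintype n] [DecidableEq n] (P Q : Matrix n n K) (ξ : Matrix n n S) :
    MvPolynomial.aeval (fun p : n × n => ξ p.1 p.2)
        (mvPolynomialX n n K * P.map (algebraMap K _) - Q.map (algebraMap K _)).det =
      (ξ * P.map (algebraMap K S) - Q.map (algebraMap K S)).det := by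
  rw [AlgHom.map_det, map_sub, map_mul, mvPolynomialX_mapMatrix_aeval]
  congr 3 <;> ext <;> simp

theorem AlgebraicIndependent.det_mul_sub_ne_zero {K S n : Type*} [Field K] [CommRing S]
    [Algebra K S] [Fintype n] [DecidableEq n] {ξ : Matrix n n S}
    (hξ : AlgebraicIndependent K fun p : n × n => ξ p.1 p.2) {P Q : Matrix n n K}
    (h : ∀ v, P *ᵥ v = 0 → Q *ᵥ v = 0 → v = 0) :
    (ξ * P.map (algebraMap K S) - Q.map (algebraMap K S)).det ≠ 0 := by
  obtain ⟨X, hX⟩ := exists_det_mul_sub_ne_zero P Q h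
  rw [← aeval_det_mvPolynomialX_mul_sub]
  intro h0
  have hX0 := aeval_det_mvPolynomialX_mul_sub P Q X
  rw [hξ.eq_zero_of_aeval_eq_zero _ h0, map_zero] at hX0
  exact hX (by simpa using hX0.symm)

theorem AlgebraicIndependent.eq_zero_of_fromRows_one_mulVec_eq {K S n : Type*} [Field K]
    [CommRing S] [IsDomain S] [Algebra K S] [Fintype n] [DecidableEq n] {ξ : Matrix n n S}
    (hξ : AlgebraicIndependent K fun p : n × n => ξ p.1 p.2) {R : Matrix (n ⊕ n) n K}
    (hR : ∀ v, R *ᵥ v = 0 → v = 0) {c d : n → S}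
    (h : fromRows 1 ξ *ᵥ c = R.map (algebraMap K S) *ᵥ d) : d = 0 := by
  rw [← fromRows_toRows R, fromRows_map, fromRows_mulVec, fromRows_mulVec, one_mulVec] at h
  have hPQ : ∀ v, R.toRows₁ *ᵥ v = 0 → R.toRows₂ *ᵥ v = 0 → v = 0 := fun v hP hQ =>
    hR v (by rw [← fromRows_toRows R, fromRows_mulVec, hP, hQ]; ext (_ | _) <;> rfl)
  refine eq_zero_of_mulVec_eq_zero (hξ.det_mul_sub_ne_zero hPQ) ?_
  obtain ⟨hc, hξc⟩ := Sum.elim_eq_iff.mp h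
  rw [sub_mulVec, ← mulVec_mulVec, ← hc, hξc, sub_self]

section

variable {n : ℕ} {ι : Type*} [Fintype ι]

theorem EuclideanSpace.ofLp_sum_smul (v : ι → EuclideanSpace ℝ (Fin n)) (c : ι → ℝ) :
    WithLp.ofLp (∑ j, c j • v j) = (Matrix.of fun i j => v j i) *ᵥ c := by
  ext i
  simp [mulVec, dotProduct, mul_comm]

theorem EuclideanSpace.mem_span_range_iff_exists_mulVec {v : ι → EuclideanSpace ℝ (Fin n)}
    {x : EuclideanSpace ℝ (Fin n)} :
    x ∈ Submodule.span ℝ (Set.range v) ↔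
      ∃ c, WithLp.ofLp x = (Matrix.of fun i j => v j i) *ᵥ c := by
  simp only [Submodule.mem_span_range_iff_exists_fun, ← ofLp_sum_smul]
  exact exists_congr fun c => by rw [eq_comm, ← (WithLp.ofLp_injective 2).eq_iff]

theorem EuclideanSpace.linearIndependent_iff_mulVec {v : ι → EuclideanSpace ℝ (Fin n)} :
    LinearIndependent ℝ v ↔ ∀ c, (Matrix.of fun i j => v j i) *ᵥ c = 0 → c = 0 := by
  refine Fintype.linearIndependent_iff.trans (forall_congr' fun c => ?_)
  rw [← ofLp_sum_smul, WithLp.ofLp_eq_zero (x := ∑ j, c j • v j), funext_iff (f := c)]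
  rfl

end

theorem IsRationalSubspace.exists_linearIndependent {n e : ℕ}
    {B : Submodule ℝ (EuclideanSpace ℝ (Fin n))} (hB : IsRationalSubspace B)
    (he : Module.finrank ℝ B = e) :
    ∃ b : Fin e → EuclideanSpace ℝ (Fin n),
      (∀ k, IsRatVec (b k)) ∧ LinearIndependent ℝ b ∧ Submodule.span ℝ (Set.range b) = B := by
  obtain ⟨S, hS, rfl⟩ := hB
  obtain ⟨t, hts, htspan, htli⟩ := _root_.exists_linearIndependent ℝ S
  have : Fintype t := htli.setFinite.fintype
  have hcard : Fintype.card t = e := by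
    rw [← he, ← htspan, finrank_span_set_eq_card htli, Set.toFinset_card]
  let σ := (Fintype.equivFinOfCardEq hcard).symm
  refine ⟨Subtype.val ∘ σ, fun k => hS _ (hts (σ k).2), htli.comp σ σ.injective, ?_⟩
  rw [← htspan, EquivLike.range_comp, Subtype.range_coe]

theorem IsRationalSubspace.exists_ratMatrix {n e : ℕ}
    {B : Submodule ℝ (EuclideanSpace ℝ (Fin n))} (hB : IsRationalSubspace B)
    (he : Module.finrank ℝ B = e) :
    ∃ R : Matrix (Fin n) (Fin e) ℚ, (∀ v, R *ᵥ v = 0 → v = 0) ∧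
      ∀ x ∈ B, ∃ d, WithLp.ofLp x = R.map (algebraMap ℚ ℝ) *ᵥ d := by
  obtain ⟨b, hbrat, hbli, rfl⟩ := hB.exists_linearIndependent he
  choose R hR using hbrat
  have hbR : (Matrix.of fun i k => b k i) = (Matrix.of fun i k => R k i).map (algebraMap ℚ ℝ) := by
    ext i k; simp [hR]
  refine ⟨Matrix.of fun i k => R k i, fun v hv => ?_, fun x hx => ?_⟩
  · have hv' : (Matrix.of fun i k => b k i) *ᵥ (algebraMap ℚ ℝ ∘ v) = 0 := by
      ext i
      rw [hbR, ← RingHom.map_mulVec, hv]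
      simp
    have := EuclideanSpace.linearIndependent_iff_mulVec.mp hbli _ hv'
    exact funext fun k => (algebraMap ℚ ℝ).injective (by simpa using congrFun this k)
  · rw [← hbR]
    exact EuclideanSpace.mem_span_range_iff_exists_mulVec.mp hx

/-- If the `ℓ²` reals `ξ_{i,j}` are algebraically independent over `ℚ`, the span `A` of the
columns of `(I_ℓ ; M_ξ)` meets every rational subspace of `ℝ^{2ℓ}` of dimension `ℓ` trivially. -/
theorem statement12 (ℓ : ℕ) (ξ : Fin ℓ → Fin ℓ → ℝ)
    (hξ : AlgebraicIndependent ℚ (fun p : Fin ℓ × Fin ℓ => ξ p.1 p.2))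
    (Y : Fin ℓ → EuclideanSpace ℝ (Fin (2 * ℓ)))
    (hY : ∀ j i, Y j i = if h : (i : ℕ) < ℓ then (if (⟨i, h⟩ : Fin ℓ) = j then 1 else 0)
      else ξ ⟨(i : ℕ) - ℓ, by have := i.isLt; omega⟩ j)
    (A : Submodule ℝ (EuclideanSpace ℝ (Fin (2 * ℓ))))
    (hA : A = Submodule.span ℝ (Set.range Y)) :
    Module.finrank ℝ A = ℓ ∧
      ∀ B : Submodule ℝ (EuclideanSpace ℝ (Fin (2 * ℓ))), IsRationalSubspace B →
        Module.finrank ℝ B = ℓ → A ⊓ B = ⊥ := by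
  let e : Fin ℓ ⊕ Fin ℓ ≃ Fin (2 * ℓ) := finSumFinEquiv.trans (finCongr (two_mul ℓ).symm)
  have hYe : (Matrix.of fun i j => Y j i).submatrix e id = fromRows 1 (Matrix.of ξ) := by
    ext (i | m) j
    · simp [e, hY, one_apply]
    · simp [e, hY]
  have hA_mem : ∀ x ∈ A, ∃ c, WithLp.ofLp x ∘ e = fromRows 1 (Matrix.of ξ) *ᵥ c := by
    intro x hx
    obtain ⟨c, hc⟩ := EuclideanSpace.mem_span_range_iff_exists_mulVec.mp (hA ▸ hx)
    exact ⟨c, by rw [hc, ← hYe]; rfl⟩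
  have hYli : LinearIndependent ℝ Y := by
    refine EuclideanSpace.linearIndependent_iff_mulVec.mpr fun c hc => ?_
    have h0 : fromRows (1 : Matrix (Fin ℓ) (Fin ℓ) ℝ) (Matrix.of ξ) *ᵥ c = 0 := by
      rw [← hYe]; exact funext fun i => congrFun hc (e i)
    exact funext fun i => by simpa using congrFun h0 (.inl i)
  refine ⟨by rw [hA, finrank_span_eq_card hYli, Fintype.card_fin], fun B hB hBℓ => ?_⟩
  obtain ⟨R, hRinj, hRB⟩ := hB.exists_ratMatrix hBℓ
  rw [Submodule.eq_bot_iff]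
  rintro x ⟨hxA, hxB⟩
  obtain ⟨c, hc⟩ := hA_mem x hxA
  obtain ⟨d, hd⟩ := hRB x hxB
  have hd0 : d = 0 := AlgebraicIndependent.eq_zero_of_fromRows_one_mulVec_eq (ξ := Matrix.of ξ) hξ
    (R := R.submatrix e id) (fun v hv => hRinj v (funext fun i => by
      have h : (R *ᵥ v) (e (e.symm i)) = 0 := congrFun hv (e.symm i)
      simpa using h))
    (by rw [← hc, hd]; rfl)
  rw [← WithLp.ofLp_eq_zero (x := x), hd, hd0, mulVec_zero]

end
end

section
/- Let n ≥ 2 and let F be a rational subspace of ℝⁿ of dimension k with 1 ≤ k ≤ n−1. Then there exist vectors g_1,…,g_n ∈ ℚⁿ that form a basis of ℝⁿ and such that for every subset I ⊆ {1,…,n} with |I| = n−k, one has Span{g_i : i ∈ I} ∩ F = {0}. -/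
/-!
Choose the vectors one at a time. A new vector `x` must avoid finitely many proper
subspaces: the span of the vectors already chosen (to keep them independent), and `span T ⊔ F`
for each set `T` of fewer than `n - k` of them (then, by modularity, `span (T ∪ {x})` still
meets `F` trivially). A rational such `x` exists because `ℚⁿ` is not a finite union of proper
subspaces.
-/

open scoped BigOperators ENNReal

noncomputable section

open Submodule

section RationalVectors

variable {n : ℕ}

def ratVecₗ (n : ℕ) : (Fin n → ℚ) →ₗ[ℚ] EuclideanSpace ℝ (Fin n) where
  toFun q := WithLp.toLp 2 fun i => (q i : ℝ)
  map_add' a b := by ext i; exact Rat.cast_add (a i) (b i)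
  map_smul' c a := by ext i; simp [Rat.smul_def]

lemma isRatVec_ratVecₗ (q : Fin n → ℚ) : IsRatVec (ratVecₗ n q) := fun i => ⟨q i, rfl⟩

lemma span_range_ratVecₗ : span ℝ (Set.range (ratVecₗ n)) = ⊤ := by
  rw [eq_top_iff, ← (EuclideanSpace.basisFun (Fin n) ℝ).toBasis.span_eq, span_le]
  rintro _ ⟨i, rfl⟩
  refine subset_span ⟨Pi.single i 1, ?_⟩
  ext j
  rcases eq_or_ne j i with rfl | hji <;> simp [ratVecₗ, Pi.single_apply, *]

lemma exists_isRatVec_forall_notMem (s : Finset (Submodule ℝ (EuclideanSpace ℝ (Fin n))))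
    (hs : ∀ W ∈ s, W ≠ ⊤) : ∃ x, IsRatVec x ∧ ∀ W ∈ s, x ∉ W := by
  classical
  let ratPart (W : Submodule ℝ (EuclideanSpace ℝ (Fin n))) : Subspace ℚ (Fin n → ℚ) :=
    (W.restrictScalars ℚ).comap (ratVecₗ n)
  have htop : ⊤ ∉ s.image ratPart := by
    simp only [Finset.mem_image, not_exists, not_and]
    intro W hW hWtop
    refine hs W hW (eq_top_iff.2 ?_)
    rw [← span_range_ratVecₗ, span_le]
    rintro _ ⟨q, rfl⟩
    exact (hWtop.symm ▸ mem_top : q ∈ ratPart W)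
  obtain ⟨q, hq⟩ :=
    (Set.ne_univ_iff_exists_notMem _).1 (Subspace.biUnion_ne_univ_of_top_notMem htop)
  simp only [Set.mem_iUnion, SetLike.mem_coe, not_exists] at hq
  exact ⟨ratVecₗ n q, isRatVec_ratVecₗ q,
    fun W hW hqW => hq _ (Finset.mem_image_of_mem _ hW) hqW⟩

end RationalVectors

section GeneralPosition

variable {K V : Type*} [Field K] [AddCommGroup V] [Module K V]

def GeneralPositionWrt (F : Submodule K V) (d : ℕ) (S : Finset V) : Prop :=
  ∀ T ⊆ S, T.card ≤ d → Disjoint (span K (T : Set V)) F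

variable {F : Submodule K V} {d : ℕ}

lemma GeneralPositionWrt.insert [DecidableEq V] {S : Finset V} (hS : GeneralPositionWrt F d S)
    {x : V} (hx : ∀ T ⊆ S, T.card < d → x ∉ span K (T : Set V) ⊔ F) :
    GeneralPositionWrt F d (insert x S) := by
  intro T hT hTd
  by_cases hxT : x ∈ T
  · have hT' : T.erase x ⊆ S := fun y hy => by
      simpa [Finset.ne_of_mem_erase hy] using hT (Finset.mem_of_mem_erase hy)
    have hcard : (T.erase x).card < d := by
      have := Finset.card_erase_add_one hxT; omega
    rw [← Finset.insert_erase hxT, Finset.coe_insert, span_insert]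
    exact (hS _ hT' hcard.le).disjoint_sup_left_of_disjoint_sup_right
      (disjoint_span_singleton_of_notMem (hx _ hT' hcard)).symm
  · exact hS T ((Finset.subset_insert_iff_of_notMem hxT).1 hT) hTd

variable [FiniteDimensional K V]

lemma finrank_span_finset_sup_lt {T : Finset V} (hT : T.card < d)
    (hd : d + Module.finrank K F ≤ Module.finrank K V) :
    Module.finrank K ↥(span K (T : Set V) ⊔ F) < Module.finrank K V :=
  calc Module.finrank K ↥(span K (T : Set V) ⊔ F)
      ≤ Module.finrank K (span K (T : Set V)) + Module.finrank K F :=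
        finrank_add_le_finrank_add_finrank _ _
    _ ≤ T.card + Module.finrank K F := by gcongr; exact finrank_span_finset_le_card T
    _ < Module.finrank K V := by omega

lemma exists_insert_generalPositionWrt [DecidableEq V] (P : V → Prop)
    (hP : ∀ s : Finset (Submodule K V), (∀ W ∈ s, W ≠ ⊤) → ∃ x, P x ∧ ∀ W ∈ s, x ∉ W)
    (hd : d + Module.finrank K F ≤ Module.finrank K V) {S : Finset V}
    (hS : LinearIndepOn K id (S : Set V)) (hSF : GeneralPositionWrt F d S)
    (hcard : S.card < Module.finrank K V) :
    ∃ x, P x ∧ x ∉ S ∧ LinearIndepOn K id ((insert x S : Finset V) : Set V) ∧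
      GeneralPositionWrt F d (insert x S) := by
  let avoid : Finset (Submodule K V) :=
    insert (span K (S : Set V))
      ((S.powerset.filter (·.card < d)).image fun T : Finset V => span K (T : Set V) ⊔ F)
  have havoid : ∀ W ∈ avoid, W ≠ ⊤ := by
    simp only [avoid, Finset.mem_insert, Finset.mem_image, Finset.mem_filter, Finset.mem_powerset]
    rintro W (rfl | ⟨T, ⟨-, hT⟩, rfl⟩) htop
    · exact ((finrank_span_finset_le_card (R := K) S).trans_lt hcard).ne
        (by rw [Set.finrank, htop, finrank_top])
    · exact (finrank_span_finset_sup_lt hT hd).ne (by rw [htop, finrank_top])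
  obtain ⟨x, hPx, hx⟩ := hP avoid havoid
  have hx_span : x ∉ span K S := hx _ (Finset.mem_insert_self _ _)
  have hx_notMem : x ∉ S := fun h => hx_span (subset_span h)
  refine ⟨x, hPx, hx_notMem, ?_, hSF.insert fun T hT hTd => hx _ ?_⟩
  · rw [Finset.coe_insert, linearIndepOn_id_insert (by simpa using hx_notMem)]
    exact ⟨hS, hx_span⟩
  · exact Finset.mem_insert_of_mem
      (Finset.mem_image_of_mem _ (Finset.mem_filter.2 ⟨Finset.mem_powerset.2 hT, hTd⟩))

lemma exists_finset_generalPositionWrt [DecidableEq V] (P : V → Prop)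
    (hP : ∀ s : Finset (Submodule K V), (∀ W ∈ s, W ≠ ⊤) → ∃ x, P x ∧ ∀ W ∈ s, x ∉ W)
    (hd : d + Module.finrank K F ≤ Module.finrank K V) {m : ℕ}
    (hm : m ≤ Module.finrank K V) :
    ∃ S : Finset V, S.card = m ∧ (∀ x ∈ S, P x) ∧ LinearIndepOn K id (S : Set V) ∧
      GeneralPositionWrt F d S := by
  induction m with
  | zero => exact ⟨∅, rfl, by simp, by simp, fun T hT _ => by simp [Finset.subset_empty.1 hT]⟩
  | succ m ih =>
    obtain ⟨S, rfl, hPS, hS, hSF⟩ := ih (by omega)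
    obtain ⟨x, hPx, hx_notMem, hS', hSF'⟩ := exists_insert_generalPositionWrt P hP hd hS hSF hm
    refine ⟨insert x S, Finset.card_insert_of_notMem hx_notMem, ?_, hS', hSF'⟩
    simpa [hPx] using hPS

end GeneralPosition

theorem statement14_general (n k : ℕ)
    (F : Submodule ℝ (EuclideanSpace ℝ (Fin n)))
    (hFk : Module.finrank ℝ F = k) :
    ∃ g : Fin n → EuclideanSpace ℝ (Fin n), (∀ i, IsRatVec (g i)) ∧
      LinearIndependent ℝ g ∧ Submodule.span ℝ (Set.range g) = ⊤ ∧
      ∀ I : Finset (Fin n), I.card = n - k →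
        Submodule.span ℝ (g '' (I : Set (Fin n))) ⊓ F = ⊥ := by
  classical
  have hdim := finrank_euclideanSpace_fin (𝕜 := ℝ) (n := n)
  have hkn : k ≤ n := by have := F.finrank_le; omega
  obtain ⟨S, hcard, hrat, hS, hSF⟩ := exists_finset_generalPositionWrt (F := F) (d := n - k)
    IsRatVec exists_isRatVec_forall_notMem (by omega) hdim.ge
  let e : Fin n ≃ S := (S.equivFinOfCardEq hcard).symm
  let g (i : Fin n) : EuclideanSpace ℝ (Fin n) := e i
  have hg : Function.Injective g := Subtype.val_injective.comp e.injective
  have hli : LinearIndependent ℝ g := hS.comp e e.injective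
  refine ⟨g, fun i => hrat _ (e i).2, hli, hli.span_eq_top_of_card_eq_finrank' (by simp [hdim]),
    fun I hI => ?_⟩
  rw [← Finset.coe_image, ← disjoint_iff]
  refine hSF _ (fun x hx => ?_) ((Finset.card_image_of_injective I hg).trans hI).le
  obtain ⟨i, -, rfl⟩ := Finset.mem_image.1 hx
  exact (e i).2

/-- There is a rational basis `g₁, …, gₙ` of `ℝⁿ` such that every `n−k` of its vectors span a
subspace meeting the given rational subspace `F` (of dimension `k`) trivially. -/
theorem statement14 (n k : ℕ) (hn : 2 ≤ n) (hk1 : 1 ≤ k) (hk : k ≤ n - 1)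
    (F : Submodule ℝ (EuclideanSpace ℝ (Fin n))) (hF : IsRationalSubspace F)
    (hFk : Module.finrank ℝ F = k) :
    ∃ g : Fin n → EuclideanSpace ℝ (Fin n), (∀ i, IsRatVec (g i)) ∧
      LinearIndependent ℝ g ∧ Submodule.span ℝ (Set.range g) = ⊤ ∧
      ∀ I : Finset (Fin n), I.card = n - k →
        Submodule.span ℝ (g '' (I : Set (Fin n))) ⊓ F = ⊥ :=
  statement14_general n k F hFk

end
end
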